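/- arXiv:math/9903039 — 4 statements merged into one kernel-verified Lean document; each statement's English description precedes it below -/
import Mathlib

section
/- Let k be an infinite field, K a finite separable field extension of k, N a positive natural number, and x ∈ K with x ∉ k. Then the set of α ∈ k such that (x + α)^N ∈ k has at most N elements. -/
/-!
By separability some `k`-embedding `σ` of `K` into an algebraic closure moves `x`. If
`(x + α)^N ∈ k` then `σ` fixes it, so `(σ x + α)^N = (x + α)^N`; since `σ x ≠ x`, such `α`
are roots of the nonzero polynomial `(σ x + X)^N - (x + X)^N`, of degree at most `N`.
-/

open Polynomial

theorem exists_algHom_apply_ne_algebraMap {k K L : Type*} [Field k] [Field K] [Field L]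
    [Algebra k K] [Algebra k L] [Algebra K L] [IsScalarTower k K L] [IsAlgClosed L]
    [Algebra.IsSeparable k K] {x : K} (hx : x ∉ Set.range (algebraMap k K)) :
    ∃ σ : K →ₐ[k] L, σ x ≠ algebraMap K L x := by
  have hsep : IsSeparable k (algebraMap K L x) :=
    (Algebra.IsSeparable.isSeparable k x).map (IsScalarTower.toAlgHom k K L)
      (algebraMap K L).injective
  have hnotMem : algebraMap K L x ∉ (⊥ : Subalgebra k L) := by
    rintro ⟨c, hc⟩
    refine hx ⟨c, (algebraMap K L).injective ?_⟩
    rwa [← IsScalarTower.algebraMap_apply]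
  obtain ⟨y, hne, hconj⟩ :=
    (notMem_iff_exists_ne_and_isConjRoot hsep (IsAlgClosed.splits _)).mp hnotMem
  have hy : aeval y (minpoly k x) = 0 := by
    simpa only [minpoly.algebraMap_eq (algebraMap K L).injective] using hconj.aeval_eq_zero
  obtain ⟨σ, hσ⟩ := IntermediateField.exists_algHom_of_splits_of_aeval
    (fun s => ⟨Algebra.IsIntegral.isIntegral s, IsAlgClosed.splits _⟩) hy
  exact ⟨σ, hσ ▸ hne.symm⟩

theorem setOf_add_pow_eq_add_pow_finite_and_ncard_le {L : Type*} [Field L] {a b : L}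
    (hab : a ≠ b) {N : ℕ} (hN : 0 < N) :
    {c : L | (a + c) ^ N = (b + c) ^ N}.Finite ∧
      {c : L | (a + c) ^ N = (b + c) ^ N}.ncard ≤ N := by
  classical
  set p : L[X] := (C a + X) ^ N - (C b + X) ^ N
  have hp : p ≠ 0 := fun h => by
    have := congrArg (eval (-b)) h
    simp [p, ← sub_eq_add_neg, sub_eq_zero, hab, hN.ne'] at this
  have hroots : {c : L | (a + c) ^ N = (b + c) ^ N} = p.roots.toFinset := by
    ext c
    simp [p, mem_roots hp, sub_eq_zero]
  rw [hroots, Set.ncard_coe_finset]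
  refine ⟨Finset.finite_toSet _, ?_⟩
  calc p.roots.toFinset.card ≤ p.roots.card := Multiset.toFinset_card_le _
    _ ≤ p.natDegree := card_roots' p
    _ ≤ N := by simp only [p]; compute_degree

theorem add_algebraMap_pow_eq_of_mem_range {k K L : Type*} [CommSemiring k] [Semiring K]
    [Semiring L] [Algebra k K] [Algebra k L] (σ τ : K →ₐ[k] L) {x : K} {α : k} {N : ℕ}
    (h : (x + algebraMap k K α) ^ N ∈ Set.range (algebraMap k K)) :
    (σ x + algebraMap k L α) ^ N = (τ x + algebraMap k L α) ^ N := by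
  obtain ⟨c, hc⟩ := h
  have hσ := congrArg σ hc
  have hτ := congrArg τ hc
  simp only [map_pow, map_add, AlgHom.commutes] at hσ hτ
  rw [← hσ, ← hτ]

theorem stmt5_general {k K : Type*} [Field k] [Field K] [Algebra k K]
    [Algebra.IsSeparable k K]
    (x : K) (hx : x ∉ Set.range (algebraMap k K)) (N : ℕ) (hN : 0 < N) :
    {α : k | (x + algebraMap k K α) ^ N ∈ Set.range (algebraMap k K)}.Finite ∧
      {α : k | (x + algebraMap k K α) ^ N ∈ Set.range (algebraMap k K)}.ncard ≤ N := by
  obtain ⟨σ, hσ⟩ := exists_algHom_apply_ne_algebraMap (L := AlgebraicClosure K) hx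
  obtain ⟨hfinite, hncard⟩ := setOf_add_pow_eq_add_pow_finite_and_ncard_le hσ hN
  have hmaps : ∀ α : k, (x + algebraMap k K α) ^ N ∈ Set.range (algebraMap k K) →
      (σ x + algebraMap k _ α) ^ N = (algebraMap K _ x + algebraMap k _ α) ^ N :=
    fun _ hα => add_algebraMap_pow_eq_of_mem_range σ (IsScalarTower.toAlgHom k K _) hα
  have hinj := (algebraMap k (AlgebraicClosure K)).injective
  exact ⟨(hfinite.preimage hinj.injOn).subset hmaps,
    (Set.ncard_le_ncard_of_injOn _ hmaps hinj.injOn hfinite).trans hncard⟩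

/-- Let `K/k` be a finite separable extension of an infinite field,
`x ∈ K \ k` and `N ≥ 1`. Then `{α ∈ k | (x + α)^N ∈ k}` has at most `N` elements. -/
theorem stmt5 {k K : Type*} [Field k] [Field K] [Algebra k K]
    [FiniteDimensional k K] [Algebra.IsSeparable k K] [Infinite k]
    (x : K) (hx : x ∉ Set.range (algebraMap k K)) (N : ℕ) (hN : 0 < N) :
    {α : k | (x + algebraMap k K α) ^ N ∈ Set.range (algebraMap k K)}.Finite ∧
      {α : k | (x + algebraMap k K α) ^ N ∈ Set.range (algebraMap k K)}.ncard ≤ N :=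
  stmt5_general x hx N hN
end

section
/- Let k be an infinite field and K a finite separable field extension of k of degree n ≥ 2. Then there exist infinitely many elements y ∈ K such that the norm N_{K/k}(y) = 1 and y is a primitive element, i.e., k(y) = K. -/
open Module IntermediateField Polynomial

set_option synthInstance.maxHeartbeats 1000000
set_option maxHeartbeats 1000000

/-- Let `k` be infinite and `K/k` finite separable of degree `≥ 2`. Then
there are infinitely many `y ∈ K` with norm `1` that are primitive elements of `K/k`. -/
theorem stmt6 {k K : Type*} [Field k] [Field K] [Algebra k K]
    [FiniteDimensional k K] [Algebra.IsSeparable k K] [Infinite k]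
    (hdeg : 2 ≤ Module.finrank k K) :
    {y : K | Algebra.norm k y = 1 ∧ IntermediateField.adjoin k {y} = ⊤}.Infinite := by
  classical
  set n := Module.finrank k K with hn
  obtain ⟨x, hx⟩ := Field.exists_primitive_element k K
  set L := AlgebraicClosure k with hL
  obtain ⟨ψ⟩ : Nonempty (K →ₐ[k] L) := ⟨IsAlgClosed.lift⟩
  have hbotne : (⊥ : IntermediateField k K) ≠ ⊤ := by
    intro h
    have h1 : finrank k (⊥ : IntermediateField k K) = 1 := IntermediateField.finrank_bot
    rw [h, IntermediateField.finrank_top'] at h1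
    omega
  have hx0 : ∀ α : k, x + algebraMap k K α ≠ 0 := by
    intro α h0
    apply hbotne
    have hxb : x ∈ (⊥ : IntermediateField k K) := by
      rw [IntermediateField.mem_bot]
      exact ⟨-α, by rw [map_neg]; linear_combination -h0⟩
    have h2 : k⟮x⟯ ≤ ⊥ := by
      rw [IntermediateField.adjoin_le_iff]
      simpa using hxb
    rw [hx] at h2
    exact le_antisymm le_top h2
  have hN0 : ∀ α : k, Algebra.norm k (x + algebraMap k K α) ≠ 0 := fun α =>
    Algebra.norm_ne_zero_iff.mpr (hx0 α)
  set y : k → K := fun α =>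
    algebraMap k K (Algebra.norm k (x + algebraMap k K α))⁻¹ * (x + algebraMap k K α) ^ n
    with hy
  have hkey : ∀ α : k, (x + algebraMap k K α) ^ n =
      algebraMap k K (Algebra.norm k (x + algebraMap k K α)) * y α := by
    intro α
    rw [hy]
    simp only
    rw [← mul_assoc, ← map_mul, mul_inv_cancel₀ (hN0 α), map_one, one_mul]
  have hnorm : ∀ α : k, Algebra.norm k (y α) = 1 := by
    intro α
    rw [hy]
    simp only [map_mul, map_pow, Algebra.norm_algebraMap, ← hn]
    rw [inv_pow, inv_mul_cancel₀]
    exact pow_ne_zero _ (hN0 α)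
  -- two distinct embeddings agreeing on a proper intermediate field
  have hsep : ∀ F : IntermediateField k K, F ≠ ⊤ →
      ∃ σ τ : K →ₐ[k] L, σ x ≠ τ x ∧ ∀ z ∈ F, σ z = τ z := by
    intro F hF
    letI : Algebra F L := (ψ.comp F.val).toAlgebra
    haveI : IsScalarTower k F L := IsScalarTower.of_algebraMap_eq fun c => (ψ.commutes c).symm
    haveI : Algebra.IsSeparable F K := Algebra.isSeparable_tower_top_of_isSeparable k F K
    have hcard : Fintype.card (K →ₐ[F] L) = finrank F K := AlgHom.card F K L
    have h2 : 1 < finrank F K := by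
      rcases Nat.lt_or_ge 1 (finrank F K) with h | h
      · exact h
      · exfalso
        have h1 : finrank F K = 1 := le_antisymm h Module.finrank_pos
        apply hF
        apply IntermediateField.eq_of_le_of_finrank_eq le_top
        have hmul := Module.finrank_mul_finrank k F K
        rw [h1, mul_one] at hmul
        rw [IntermediateField.finrank_top', hmul]
    obtain ⟨φ1, φ2, hφ⟩ := Fintype.exists_pair_of_one_lt_card (hcard ▸ h2)
    refine ⟨φ1.restrictScalars k, φ2.restrictScalars k, ?_, ?_⟩
    · intro hxx
      apply hφ
      have heq := (Field.primitive_element_iff_algHom_eq_of_eval' k L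
        (fun z => IsAlgClosed.splits _) x).mp hx hxx
      exact AlgHom.restrictScalars_injective k heq
    · intro z hz
      show φ1 z = φ2 z
      rw [show z = algebraMap F K ⟨z, hz⟩ from rfl, φ1.commutes, φ2.commutes]
  -- finiteness of parameters landing in a proper intermediate field
  have hFfin : ∀ F : IntermediateField k K, F ≠ ⊤ → {α : k | y α ∈ F}.Finite := by
    intro F hF
    obtain ⟨σ, τ, hστ, hag⟩ := hsep F hF
    set R : L[X] := (X + C (σ x)) ^ n - (X + C (τ x)) ^ n with hR
    have hRne : R ≠ 0 := by
      intro h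
      apply hστ
      rw [hR, sub_eq_zero] at h
      have h2 := congrArg (Polynomial.eval (-(σ x))) h
      simp only [eval_pow, eval_add, eval_X, eval_C, neg_add_cancel] at h2
      rw [zero_pow (by omega), eq_comm, pow_eq_zero_iff (by omega)] at h2
      linear_combination -h2
    have hsub : {α : k | y α ∈ F} ⊆ (fun α => algebraMap k L α) ⁻¹' {z | R.IsRoot z} := by
      intro α hα
      have hmem : (x + algebraMap k K α) ^ n ∈ F := by
        rw [hkey α]
        exact F.mul_mem (F.algebraMap_mem _) hα
      have heq := hag _ hmem
      simp only [map_pow, map_add, AlgHom.commutes] at heq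
      simp only [Set.mem_preimage, Set.mem_setOf_eq, Polynomial.IsRoot, hR, eval_sub,
        eval_pow, eval_add, eval_X, eval_C, sub_eq_zero]
      rw [add_comm (σ x), add_comm (τ x)] at heq
      exact heq
    exact (Set.Finite.preimage (Function.Injective.injOn (algebraMap k L).injective)
      (Polynomial.finite_setOf_isRoot hRne)).subset hsub
  -- fibers of y over c ≠ 1 are finite
  have hfiber : ∀ c : K, c ≠ 1 → {α : k | y α = c}.Finite := by
    intro c hc
    set P : L[X] := (X + C (ψ x)) ^ n - C (ψ c) * ∏ σ : K →ₐ[k] L, (X + C (σ x)) with hP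
    have hPmon : (∏ σ : K →ₐ[k] L, (X + C (σ x)) : L[X]).Monic :=
      monic_prod_of_monic _ _ fun σ _ => monic_X_add_C _
    have hdegP : (∏ σ : K →ₐ[k] L, (X + C (σ x)) : L[X]).natDegree = n := by
      rw [natDegree_prod _ _ fun σ _ => (monic_X_add_C (σ x)).ne_zero]
      simp only [natDegree_X_add_C, Finset.sum_const, smul_eq_mul, mul_one, Finset.card_univ]
      rw [AlgHom.card]
    have hcoeff : P.coeff n = 1 - ψ c := by
      rw [hP, coeff_sub, coeff_C_mul]
      have hmon1 : ((X + C (ψ x)) ^ n : L[X]).Monic := (monic_X_add_C _).pow _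
      have hd1 : ((X + C (ψ x)) ^ n : L[X]).natDegree = n := by
        rw [natDegree_pow, natDegree_X_add_C, mul_one]
      have h1 := hmon1.coeff_natDegree
      rw [hd1] at h1
      have h2 := hPmon.coeff_natDegree
      rw [hdegP] at h2
      rw [h1, h2, mul_one]
    have hPne : P ≠ 0 := by
      intro h
      rw [h, coeff_zero] at hcoeff
      apply hc
      apply ψ.toRingHom.injective
      show ψ c = ψ 1
      rw [map_one]
      exact (sub_eq_zero.mp hcoeff.symm).symm
    have hsub : {α : k | y α = c} ⊆ (fun α => algebraMap k L α) ⁻¹' {z | P.IsRoot z} := by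
      intro α hα
      have hα' : (x + algebraMap k K α) ^ n =
          algebraMap k K (Algebra.norm k (x + algebraMap k K α)) * c := by
        rw [hkey α, hα]
      have hnormL : ψ (algebraMap k K (Algebra.norm k (x + algebraMap k K α))) =
          ∏ σ : K →ₐ[k] L, (algebraMap k L α + σ x) := by
        rw [ψ.commutes, Algebra.norm_eq_prod_embeddings]
        exact Finset.prod_congr rfl fun σ _ => by
          rw [map_add, AlgHom.commutes, add_comm]
      have heq := congrArg ψ hα'
      rw [map_mul, map_pow, map_add, AlgHom.commutes, hnormL] at heq
      simp only [Set.mem_preimage, Set.mem_setOf_eq, Polynomial.IsRoot, hP, eval_sub, eval_mul,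
        eval_pow, eval_add, eval_X, eval_C, eval_prod, sub_eq_zero]
      rw [add_comm (ψ x)] at heq
      rw [heq, mul_comm]
    exact (Set.Finite.preimage (Function.Injective.injOn (algebraMap k L).injective)
      (Polynomial.finite_setOf_isRoot hPne)).subset hsub
  -- assemble
  haveI : Finite (IntermediateField k K) :=
    Field.finite_intermediateField_of_exists_primitive_element k K ⟨x, hx⟩
  set Bad : Set k := ⋃ F ∈ {F : IntermediateField k K | F ≠ ⊤}, {α : k | y α ∈ F} with hBadDef
  have hBad : Bad.Finite := Set.Finite.biUnion (Set.toFinite _) fun F hF => hFfin F hF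
  have hGood : (Badᶜ).Infinite := hBad.infinite_compl
  have hprim : ∀ α ∈ Badᶜ, IntermediateField.adjoin k {y α} = ⊤ := by
    intro α hα
    by_contra hne
    exact hα (Set.mem_biUnion hne (IntermediateField.mem_adjoin_simple_self k (y α)))
  have himg : y '' Badᶜ ⊆
      {c : K | Algebra.norm k c = 1 ∧ IntermediateField.adjoin k {c} = ⊤} := by
    rintro c ⟨α, hα, rfl⟩
    exact ⟨hnorm α, hprim α hα⟩
  have himgInf : (y '' Badᶜ).Infinite := by
    by_contra hcon
    rw [Set.not_infinite] at hcon
    have hsub2 : Badᶜ ⊆ ⋃ c ∈ y '' Badᶜ, {α : k | y α = c} := fun α hα =>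
      Set.mem_biUnion (Set.mem_image_of_mem y hα) rfl
    have hfinG : (Badᶜ).Finite := by
      refine Set.Finite.subset (Set.Finite.biUnion hcon fun c hc => ?_) hsub2
      refine hfiber c ?_
      rintro rfl
      obtain ⟨α, hα, hα1⟩ := hc
      have h1 : IntermediateField.adjoin k {(1 : K)} = ⊤ := hα1 ▸ hprim α hα
      apply hbotne
      have hle : IntermediateField.adjoin k {(1 : K)} ≤ ⊥ := by
        rw [IntermediateField.adjoin_le_iff]
        intro z hz
        rw [Set.mem_singleton_iff.mp hz]
        exact one_mem _
      rw [h1] at hle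
      exact le_antisymm le_top hle
    exact hGood hfinG
  exact himgInf.mono himg
end

section
/- Let K be a finite extension of the finite field k. Then there exists a primitive element x of K over k (i.e., k(x) = K) with N_{K/k}(x) = 1. -/
/-!
Since the norm `Kˣ → kˣ` is surjective, its kernel is a cyclic group of order
`(q ^ n - 1) / (q - 1) ≥ q ^ (n - 1)`, where `q = #k` and `n = [K : k]`. A generator `x` of the
kernel has norm `1`, and its order is less than `#k⟮x⟯ = q ^ [k⟮x⟯ : k]`; hence `[k⟮x⟯ : k] = n`.
-/

open Module IntermediateField

theorem IntermediateField.orderOf_lt_natCard_of_mem {k K : Type*} [Field k] [Field K]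
    [Algebra k K] (F : IntermediateField k K) [Finite F] (x : Kˣ) (hx : (x : K) ∈ F) :
    orderOf x < Nat.card F := by
  let y : Fˣ := Units.mk0 ⟨x, hx⟩ (by simp [← Subtype.coe_ne_coe])
  calc orderOf x = orderOf (Units.map F.val.toMonoidHom y) := congrArg orderOf (Units.ext rfl)
    _ = orderOf y :=
        orderOf_injective (Units.map F.val.toMonoidHom) (Units.map_injective F.val.injective) y
    _ ≤ Nat.card Fˣ := orderOf_le_card
    _ < Nat.card F := by rw [Nat.card_units]; exact Nat.sub_lt Nat.card_pos one_pos

theorem IntermediateField.adjoin_simple_eq_top_of_pow_le_orderOf {k K : Type*} [Field k]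
    [Finite k] [Field K] [Algebra k K] [FiniteDimensional k K] (x : Kˣ)
    (h : Nat.card k ^ (finrank k K - 1) ≤ orderOf x) : k⟮(x : K)⟯ = ⊤ := by
  have : Finite K := Module.finite_of_finite k
  have hlt : Nat.card k ^ (finrank k K - 1) < Nat.card k ^ finrank k k⟮(x : K)⟯ := by
    rw [← Module.natCard_eq_pow_finrank]
    exact h.trans_lt (orderOf_lt_natCard_of_mem _ x (mem_adjoin_simple_self k _))
  have hrank := (Nat.pow_lt_pow_iff_right Finite.one_lt_card).mp hlt
  refine eq_of_le_of_finrank_le le_top ?_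
  rw [finrank_top']
  omega

theorem FiniteField.natCard_ker_unitsMap_norm_mul {k K : Type*} [Field k] [Field K] [Algebra k K]
    [Finite K] :
    Nat.card (Units.map (Algebra.norm k : K →* k)).ker * (Nat.card k - 1) = Nat.card K - 1 := by
  rw [← Nat.card_units, ← Nat.card_units,
    ← (Units.map (Algebra.norm k : K →* k)).ker.card_mul_index, Subgroup.index_ker,
    MonoidHom.range_eq_top.mpr (unitsMap_norm_surjective k K), Subgroup.card_top]

theorem FiniteField.pow_finrank_pred_le_natCard_ker_unitsMap_norm {k K : Type*} [Field k]
    [Finite k] [Field K] [Algebra k K] [FiniteDimensional k K] :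
    Nat.card k ^ (finrank k K - 1) ≤ Nat.card (Units.map (Algebra.norm k : K →* k)).ker := by
  have : Finite K := Module.finite_of_finite k
  have hq : 0 < Nat.card k - 1 := Nat.sub_pos_of_lt (Finite.one_lt_card (α := k))
  obtain ⟨n, hn⟩ : ∃ n, finrank k K = n + 1 := Nat.exists_eq_add_one.mpr finrank_pos
  refine Nat.le_of_mul_le_mul_right ?_ hq
  rw [natCard_ker_unitsMap_norm_mul, Module.natCard_eq_pow_finrank (K := k) (V := K), hn,
    Nat.add_sub_cancel, Nat.mul_sub_one, ← pow_succ]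
  exact Nat.sub_le_sub_left (Nat.one_le_pow _ _ (Nat.card_pos (α := k))) _

/-- Let `K` be a finite extension of a finite field `k`. Then there is a
primitive element `x` of `K/k` with norm `1`. -/
theorem stmt7 {k K : Type*} [Field k] [Finite k] [Field K] [Algebra k K]
    [FiniteDimensional k K] :
    ∃ x : K, IntermediateField.adjoin k {x} = ⊤ ∧ Algebra.norm k x = 1 := by
  have : Finite K := Module.finite_of_finite k
  obtain ⟨g, hg⟩ :=
    IsCyclic.exists_ofOrder_eq_natCard (α := (Units.map (Algebra.norm k : K →* k)).ker)
  refine ⟨(g : Kˣ), adjoin_simple_eq_top_of_pow_le_orderOf _ ?_, congrArg Units.val g.2⟩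
  rw [Subgroup.orderOf_coe, hg]
  exact FiniteField.pow_finrank_pred_le_natCard_ker_unitsMap_norm
end

section
/- Let k = 𝔽_q be a finite field with q ≥ 4 and S = k^t (t ≥ 1 copies of k) with T' the subgroup of S* consisting of tuples with product of coordinates equal to 1. Then the k-linear span of T' inside S equals all of S. -/
/-!
For `a ≠ 0` the tuple with `a` in place `j`, `a⁻¹` in place `i ≠ j` and `1` elsewhere has
product `1`; subtracting the all-ones tuple leaves `(a - 1) • (eⱼ - a⁻¹ • eᵢ)`. Two such
values `a ≠ b` outside `{0, 1}`, which exist as soon as `q ≥ 4`, give `eⱼ - a⁻¹ • eᵢ` and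
`eⱼ - b⁻¹ • eᵢ` in the span, and their difference is a nonzero multiple of `eᵢ`.
-/

open Submodule

/-- The paper's `T'`: tuples of units whose coordinates multiply to `1`. -/
def normOneTuples (ι k : Type*) [Fintype ι] [Field k] : Set (ι → k) :=
  {v | (∀ i, v i ≠ 0) ∧ ∏ i, v i = 1}

section

variable {ι k : Type*} [Fintype ι] [Field k]

lemma one_mem_normOneTuples : (1 : ι → k) ∈ normOneTuples ι k :=
  ⟨fun _ => one_ne_zero, Finset.prod_const_one⟩

variable [DecidableEq ι]

lemma mulSingle_mul_mulSingle_inv_mem_normOneTuples (i j : ι) {a : k} (ha : a ≠ 0) :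
    Pi.mulSingle j a * Pi.mulSingle i a⁻¹ ∈ normOneTuples ι k := by
  refine ⟨fun m => mul_ne_zero ?_ ?_, ?_⟩
  · rw [Pi.mulSingle_apply]; split_ifs <;> simp [ha]
  · rw [Pi.mulSingle_apply]; split_ifs <;> simp [ha]
  · rw [Finset.prod_congr rfl fun m _ => Pi.mul_apply _ _ m, Finset.prod_mul_distrib,
      Finset.prod_pi_mulSingle', Finset.prod_pi_mulSingle', if_pos (Finset.mem_univ _), if_pos (Finset.mem_univ _), mul_inv_cancel₀ ha]

lemma single_sub_inv_smul_single_mem_span {i j : ι} (hij : i ≠ j) {a : k} (ha₀ : a ≠ 0)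
    (ha₁ : a ≠ 1) :
    Pi.single j 1 - a⁻¹ • Pi.single i 1 ∈ span k (normOneTuples ι k) := by
  have hmem := Submodule.sub_mem (span k (normOneTuples ι k))
    (subset_span (mulSingle_mul_mulSingle_inv_mem_normOneTuples i j ha₀))
    (subset_span one_mem_normOneTuples)
  convert smul_mem _ (a - 1)⁻¹ hmem using 1
  have ha₁' : a - 1 ≠ 0 := sub_ne_zero.2 ha₁
  ext m
  simp only [Pi.sub_apply, Pi.smul_apply, Pi.mul_apply, Pi.one_apply, Pi.single_apply,
    Pi.mulSingle_apply, smul_eq_mul]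
  rcases eq_or_ne m j with rfl | hj
  · rw [if_pos rfl, if_pos rfl, if_neg hij.symm, if_neg hij.symm]
    field_simp
    ring
  rcases eq_or_ne m i with rfl | hi
  · rw [if_pos rfl, if_pos rfl, if_neg hj, if_neg hj]
    field_simp
    ring
  · rw [if_neg hi, if_neg hi, if_neg hj, if_neg hj]
    ring

lemma single_mem_span_normOneTuples {i j : ι} (hij : i ≠ j) {a b : k} (ha₀ : a ≠ 0)
    (ha₁ : a ≠ 1) (hb₀ : b ≠ 0) (hb₁ : b ≠ 1) (hab : a ≠ b) :
    Pi.single i 1 ∈ span k (normOneTuples ι k) := by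
  have hmem := sub_mem (single_sub_inv_smul_single_mem_span hij ha₀ ha₁)
    (single_sub_inv_smul_single_mem_span hij hb₀ hb₁)
  have hinv : b⁻¹ - a⁻¹ ≠ 0 := sub_ne_zero.2 (inv_injective.ne hab.symm)
  convert smul_mem _ (b⁻¹ - a⁻¹)⁻¹ hmem using 1
  rw [sub_sub_sub_cancel_left, ← sub_smul, smul_smul, inv_mul_cancel₀ hinv, one_smul]

theorem span_normOneTuples_eq_top {a b : k} (ha₀ : a ≠ 0) (ha₁ : a ≠ 1) (hb₀ : b ≠ 0)
    (hb₁ : b ≠ 1) (hab : a ≠ b) : span k (normOneTuples ι k) = ⊤ := by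
  rw [eq_top_iff, ← (Pi.basisFun k ι).span_eq, span_le]
  rintro _ ⟨i, rfl⟩
  rw [Pi.basisFun_apply]
  by_cases h : ∃ j, i ≠ j
  · obtain ⟨j, hij⟩ := h
    exact single_mem_span_normOneTuples hij ha₀ ha₁ hb₀ hb₁ hab
  · simp only [not_exists, not_not] at h
    have : (Pi.single i 1 : ι → k) = 1 := funext fun m => by simp [← h m]
    exact this ▸ subset_span one_mem_normOneTuples

end

lemma exists_pair_ne_zero_ne_one {k : Type*} [Field k] [Fintype k] [DecidableEq k]
    (hk : 4 ≤ Fintype.card k) : ∃ a b : k, a ≠ 0 ∧ a ≠ 1 ∧ b ≠ 0 ∧ b ≠ 1 ∧ a ≠ b := by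
  have hcard : 1 < (Finset.univ \ {0, 1} : Finset k).card := by
    rw [Finset.card_sdiff_of_subset (Finset.subset_univ _), Finset.card_pair zero_ne_one,
      Finset.card_univ]
    omega
  obtain ⟨a, ha, b, hb, hab⟩ := Finset.one_lt_card.1 hcard
  simp only [Finset.mem_sdiff, Finset.mem_univ, Finset.mem_insert, Finset.mem_singleton,
    true_and, not_or] at ha hb
  exact ⟨a, b, ha.1, ha.2, hb.1, hb.2, hab⟩

theorem stmt18_general {k : Type*} [Field k] [Fintype k] (hk : 4 ≤ Fintype.card k)
    (t : ℕ) :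
    Submodule.span k {v : Fin t → k | (∀ i, v i ≠ 0) ∧ ∏ i, v i = 1} = ⊤ := by
  classical
  obtain ⟨a, b, ha₀, ha₁, hb₀, hb₁, hab⟩ := exists_pair_ne_zero_ne_one hk
  exact span_normOneTuples_eq_top ha₀ ha₁ hb₀ hb₁ hab

/-- Let `k` be a finite field with `|k| ≥ 4` and `S = k^t` (`t ≥ 1`), and
let `T'` be the set of tuples of nonzero entries with product `1`. Then the `k`-linear
span of `T'` is all of `S`. -/
theorem stmt18 {k : Type*} [Field k] [Fintype k] (hk : 4 ≤ Fintype.card k)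
    (t : ℕ) (ht : 1 ≤ t) :
    Submodule.span k {v : Fin t → k | (∀ i, v i ≠ 0) ∧ ∏ i, v i = 1} = ⊤ :=
  stmt18_general hk t
end
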